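/- Assume hypotheses (H₁), (H₂), (H₃) hold for f̃ and the horizontal lines Γ₀, Γ₁, Γ₂, and let x ∈ Θ(Ã₀). Then the sequence (f̃⁻ⁿ(Λ₀⁻(x)))_{n∈ℕ} is uniformly bounded to the right: for every real number M there exists n₀ ∈ ℕ such that for every integer n ≥ n₀, f̃⁻ⁿ(Λ₀⁻(x)) ⊆ {z̃ ∈ Ã₀ : p₁(z̃) < M}. -/

import Mathlib

open Set Function Topology

noncomputable section

/-- The deck transformation `T(x,y) = (x+1, y)` of the universal covering of the annulus. -/
def deckT : Equiv.Perm (ℝ × ℝ) where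
  toFun p := (p.1 + 1, p.2)
  invFun p := (p.1 - 1, p.2)
  left_inv p := by simp
  right_inv p := by simp

/-- `g` is isotopic to the identity (in particular orientation preserving). -/
def IsotopicToIdP (g : ℝ × ℝ → ℝ × ℝ) : Prop :=
  ∃ H : ℝ × (ℝ × ℝ) → ℝ × ℝ, Continuous H ∧ (∀ z, H (0, z) = z) ∧ (∀ z, H (1, z) = g z) ∧
    ∀ t : ℝ, IsHomeomorph fun z => H (t, z)

/-- The closed horizontal band `ℝ × [b, a]`. -/
def BandAB (a b : ℝ) : Set (ℝ × ℝ) := {p | b ≤ p.2 ∧ p.2 ≤ a}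

/-- The horizontal line `Γ = ℝ × {c}`. -/
def Horiz (c : ℝ) : Set (ℝ × ℝ) := {p | p.2 = c}

/-- The maximal `f̃`-invariant subset `Θ(Ẽ) = ⋂_{n ∈ ℤ} f̃ⁿ(Ẽ)`. -/
def ThetaZ (ftil : Equiv.Perm (ℝ × ℝ)) (E : Set (ℝ × ℝ)) : Set (ℝ × ℝ) :=
  ⋂ n : ℤ, (ftil ^ n) '' E

/-- The rotation set `ρ_{K̃}(f̃)` of a set `K̃ ⊆ ℝ²`. -/
def rhoB (ftil : Equiv.Perm (ℝ × ℝ)) (K : Set (ℝ × ℝ)) : Set EReal :=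
  ⋂ (m : ℕ), ⋂ (_ : 1 ≤ m), closure (⋃ (n : ℕ), ⋃ (_ : m ≤ n),
    {x : EReal | ∃ zt ∈ K, (ftil ^ n) zt ∈ K ∧
      x = (((((ftil ^ n) zt).1 - zt.1) / n : ℝ) : EReal)})

/-- The unstable set `Λ⁻` of the band `ℝ × [b, a]`. -/
def LamM (ftil : Equiv.Perm (ℝ × ℝ)) (a b : ℝ) : Set (ℝ × ℝ) :=
  ⋂ n : ℕ, ((ftil ^ n) '' {p : ℝ × ℝ | p.2 ≤ a} ∩ {p : ℝ × ℝ | b ≤ p.2})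

/-- The stable set `Λ⁺` of the band `ℝ × [b, a]`. -/
def LamP (ftil : Equiv.Perm (ℝ × ℝ)) (a b : ℝ) : Set (ℝ × ℝ) :=
  ⋂ n : ℕ, ({p : ℝ × ℝ | p.2 ≤ a} ∩ (ftil ^ n) ⁻¹' {p : ℝ × ℝ | b ≤ p.2})

/-!
The sets `f̃⁻ⁿ(Λ₀⁻(x))` lie in the band `Ã₀` and avoid `U = f̃(ℝ × (c₀, +∞))`, an open connected
`T`-invariant set containing `ℝ × [c₀, +∞)` and, by (H₂), a point below `Γ₁`. A polygonal path in
`U` crossing the band, together with its integer translates, cuts the band into pieces of bounded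
width, so these connected sets have uniformly bounded horizontal extent. Each of them contains
`f̃⁻ⁿ(x)`, which drifts to `-∞` because the rotation set of `Θ(Ã₀)` is positive.

That a path crossing the band separates it is a crossing-number argument: the signed number of
crossings of the path with the horizontal ray to the left of `z` is locally constant off the path,
`0` to the left of it and `1` to the right.
-/

open Filter Metric

lemma Relation.ReflTransGen.exists_seq {α : Type*} {r : α → α → Prop} {a b : α}
    (h : Relation.ReflTransGen r a b) :
    ∃ (m : ℕ) (v : ℕ → α), v 0 = a ∧ v m = b ∧ ∀ i < m, r (v i) (v (i + 1)) := by
  induction h with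
  | refl => exact ⟨0, fun _ => a, rfl, rfl, by simp⟩
  | @tail c d _ hcd ih =>
    obtain ⟨m, v, hv0, hvm, hv⟩ := ih
    refine ⟨m + 1, fun i => if i ≤ m then v i else d, by simp [hv0], by simp, fun i hi => ?_⟩
    rcases (Nat.lt_succ_iff.1 hi).lt_or_eq with hi | rfl
    · simpa [hi.le, Nat.succ_le_of_lt hi] using hv i hi
    · simpa [hvm] using hcd

section PolygonalWall

variable {p q z : ℝ × ℝ}

def heightClamp (p q : ℝ × ℝ) (t : ℝ) : ℝ := max (min p.2 q.2) (min (max p.2 q.2) t)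

-- Clamping the height keeps the point on the segment and makes it continuous in `t`.
def segmentAtHeight (p q : ℝ × ℝ) (t : ℝ) : ℝ × ℝ :=
  (p.1 + (heightClamp p q t - p.2) / (q.2 - p.2) * (q.1 - p.1), heightClamp p q t)

lemma heightClamp_mem_uIcc (t : ℝ) : heightClamp p q t ∈ uIcc p.2 q.2 :=
  ⟨le_max_left _ _, max_le min_le_max (min_le_left _ _)⟩

lemma heightClamp_of_mem_uIcc {t : ℝ} (ht : t ∈ uIcc p.2 q.2) : heightClamp p q t = t := by
  rw [heightClamp, min_eq_right ht.2, max_eq_right ht.1]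

lemma heightClamp_mem_uIcc_of_mem {s : ℝ} (hs : s ∈ uIcc p.2 q.2) (t : ℝ) :
    heightClamp p q t ∈ uIcc t s := by
  obtain ⟨hs₁, hs₂⟩ := hs
  simp only [heightClamp, mem_uIcc]
  rcases le_total t s with h | h
  · left; constructor
    · exact le_max_of_le_right (le_min (h.trans hs₂) le_rfl)
    · exact max_le hs₁ (min_le_right _ _ |>.trans h)
  · right; constructor
    · exact le_max_of_le_right (le_min hs₂ h)
    · exact max_le (hs₁.trans h) (min_le_right _ _)

lemma continuous_segmentAtHeight (p q : ℝ × ℝ) : Continuous (segmentAtHeight p q) := by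
  unfold segmentAtHeight heightClamp
  fun_prop

lemma segmentAtHeight_mem_segment (hpq : p.2 ≠ q.2) (t : ℝ) :
    segmentAtHeight p q t ∈ segment ℝ p q := by
  have hd : q.2 - p.2 ≠ 0 := sub_ne_zero.2 hpq.symm
  have := heightClamp_mem_uIcc (p := p) (q := q) t
  rw [← segment_eq_uIcc, segment_eq_image'] at this
  obtain ⟨θ, hθ, hs⟩ := this
  rw [segment_eq_image']
  refine ⟨θ, hθ, Prod.ext ?_ ?_⟩
  · simp only [segmentAtHeight, ← hs, smul_eq_mul, Prod.fst_add, Prod.smul_fst, Prod.fst_sub]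
    field_simp
    ring
  · simpa [segmentAtHeight] using hs

lemma segmentAtHeight_left_fst (p q : ℝ × ℝ) : (segmentAtHeight p q p.2).1 = p.1 := by
  simp [segmentAtHeight, heightClamp_of_mem_uIcc (left_mem_uIcc : p.2 ∈ uIcc p.2 q.2)]

lemma segmentAtHeight_right_fst (hpq : p.2 ≠ q.2) : (segmentAtHeight p q q.2).1 = q.1 := by
  have hd : q.2 - p.2 ≠ 0 := sub_ne_zero.2 hpq.symm
  simp [segmentAtHeight, heightClamp_of_mem_uIcc (right_mem_uIcc : q.2 ∈ uIcc p.2 q.2), hd]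

lemma fst_mem_uIcc_of_mem_segment (hz : z ∈ segment ℝ p q) : z.1 ∈ uIcc p.1 q.1 := by
  obtain ⟨a, b, ha, hb, hab, rfl⟩ := hz
  rw [← segment_eq_uIcc]
  exact ⟨a, b, ha, hb, hab, by simp⟩

end PolygonalWall

section CrossingNumber

variable {p q z z₀ : ℝ × ℝ}

def heightStep (a t : ℝ) : ℤ := if a ≤ t then 1 else 0

def crossingSign (p q : ℝ × ℝ) (t : ℝ) : ℤ := heightStep p.2 t - heightStep q.2 t

lemma mem_uIcc_of_crossingSign_ne_zero {t : ℝ} (h : crossingSign p q t ≠ 0) :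
    t ∈ uIcc p.2 q.2 := by
  unfold crossingSign heightStep at h
  split_ifs at h <;> simp_all [mem_uIcc, le_of_lt]

lemma threshold_mem_uIcc_of_heightStep_sub_ne_zero {a s t : ℝ}
    (h : heightStep a t - heightStep a s ≠ 0) : a ∈ uIcc s t := by
  unfold heightStep at h
  split_ifs at h <;> simp_all [mem_uIcc, le_of_lt]

def leftIndicator (p q z : ℝ × ℝ) : ℤ := if (segmentAtHeight p q z.2).1 < z.1 then 1 else 0

/-- The signed number of crossings of the horizontal ray to the left of `z` with the polygonal
path `v 0, …, v m`. -/
def wallCrossingNumber (v : ℕ → ℝ × ℝ) (m : ℕ) (z : ℝ × ℝ) : ℤ :=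
  ∑ i ∈ Finset.range m, crossingSign (v i) (v (i + 1)) z.2 * leftIndicator (v i) (v (i + 1)) z

def polygonalWall (v : ℕ → ℝ × ℝ) (m : ℕ) : Set (ℝ × ℝ) :=
  ⋃ i ∈ Iio m, segment ℝ (v i) (v (i + 1))

lemma isClosed_polygonalWall (v : ℕ → ℝ × ℝ) (m : ℕ) : IsClosed (polygonalWall v m) :=
  (finite_Iio m).isClosed_biUnion fun i _ => by
    rw [segment_eq_image_lineMap]
    exact (isCompact_Icc.image AffineMap.lineMap_continuous).isClosed

lemma sum_range_sub_mul_eq_zero {R : Type*} [CommRing R] {δ ℓ : ℕ → R} {m : ℕ} (h₀ : δ 0 = 0)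
    (hm : δ m = 0) (h : ∀ k, k + 1 < m → δ (k + 1) ≠ 0 → ℓ (k + 1) = ℓ k) :
    ∑ i ∈ Finset.range m, (δ i - δ (i + 1)) * ℓ i = 0 := by
  suffices key : ∀ n, n + 1 ≤ m →
      ∑ i ∈ Finset.range (n + 1), (δ i - δ (i + 1)) * ℓ i = -(δ (n + 1) * ℓ n) by
    rcases m with _ | n
    · simp
    · rw [key n le_rfl, hm, zero_mul, neg_zero]
  intro n hn
  induction n with
  | zero => simp [h₀]
  | succ n ih =>
    rw [Finset.sum_range_succ, ih (by omega)]
    by_cases hδ : δ (n + 1) = 0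
    · simp [hδ]
    · rw [h n (by omega) hδ]
      ring

lemma leftIndicator_eq_of_mem_ball {ε : ℝ} (hpq : p.2 ≠ q.2)
    (hε : Disjoint (segment ℝ p q) (ball z₀ ε)) (hz : z ∈ ball z₀ ε) (hzpq : z.2 ∈ uIcc p.2 q.2) :
    leftIndicator p q z = leftIndicator p q z₀ := by
  set g := segmentAtHeight p q
  have hz' := hz
  rw [mem_ball, Prod.dist_eq, max_lt_iff, Real.dist_eq, Real.dist_eq] at hz'
  -- along heights between `z₀.2` and `z.2` the segment stays `ε`-far from `z₀` horizontally
  have hgap : ∀ t ∈ uIcc z₀.2 z.2, ε ≤ |(g t).1 - z₀.1| := by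
    intro t ht
    have hgt : (g t).2 ∈ uIcc z₀.2 z.2 :=
      uIcc_subset_uIcc ht right_mem_uIcc (heightClamp_mem_uIcc_of_mem hzpq t)
    have hfar : ε ≤ dist (g t) z₀ :=
      not_lt.1 fun h => hε.ne_of_mem (segmentAtHeight_mem_segment hpq t) h rfl
    rw [Prod.dist_eq, Real.dist_eq, Real.dist_eq] at hfar
    have := abs_sub_left_of_mem_uIcc hgt
    exact (le_max_iff.1 hfar).resolve_right (by linarith)
  have hne : ∀ t ∈ uIcc z₀.2 z.2, (g t).1 ≠ z₀.1 := fun t ht h => by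
    have := hgap t ht
    rw [h, sub_self, abs_zero] at this
    exact (pos_of_mem_ball hz).not_ge this
  have hcont : ContinuousOn (fun t => (g t).1) (uIcc z₀.2 z.2) :=
    (continuous_fst.comp (continuous_segmentAtHeight p q)).continuousOn
  have hsame : (g z.2).1 < z₀.1 ↔ (g z₀.2).1 < z₀.1 := by
    constructor <;> intro h <;> by_contra h' <;> push Not at h'
    · obtain ⟨t, ht, hgt⟩ := intermediate_value_uIcc hcont (mem_uIcc.2 (Or.inr ⟨h.le, h'⟩))
      exact hne t ht hgt
    · obtain ⟨t, ht, hgt⟩ := intermediate_value_uIcc hcont (mem_uIcc.2 (Or.inl ⟨h.le, h'⟩))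
      exact hne t ht hgt
  have hshift : (g z.2).1 < z.1 ↔ (g z.2).1 < z₀.1 := by
    have h₁ := hgap z.2 right_mem_uIcc
    have h₂ := abs_lt.1 hz'.1
    constructor <;> intro h <;> rcases abs_cases ((g z.2).1 - z₀.1) with ⟨h₃, _⟩ | ⟨h₃, _⟩ <;>
      linarith
  simp only [leftIndicator, hshift, hsame, g]

end CrossingNumber

section Separation

variable {v : ℕ → ℝ × ℝ} {m : ℕ}

lemma wallCrossingNumber_eventually_eq (hv : ∀ i < m, (v i).2 ≠ (v (i + 1)).2) {z₀ : ℝ × ℝ}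
    (hz₀ : z₀ ∉ polygonalWall v m) (h₀ : (v 0).2 < z₀.2) (hm : z₀.2 < (v m).2) :
    ∀ᶠ z in 𝓝 z₀, wallCrossingNumber v m z = wallCrossingNumber v m z₀ := by
  obtain ⟨ε, hε, hball⟩ := Metric.mem_nhds_iff.1
    ((isClosed_polygonalWall v m).isOpen_compl.mem_nhds hz₀)
  have hdisj : ∀ i < m, Disjoint (segment ℝ (v i) (v (i + 1))) (ball z₀ ε) := fun i hi =>
    disjoint_left.2 fun w hw hwb => hball hwb (mem_biUnion (mem_Iio.2 hi) hw)
  have hr : 0 < min ε (min (z₀.2 - (v 0).2) ((v m).2 - z₀.2)) := by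
    simp only [lt_min_iff, sub_pos]
    exact ⟨hε, h₀, hm⟩
  filter_upwards [ball_mem_nhds z₀ hr] with z hz
  have hzε : z ∈ ball z₀ ε := ball_subset_ball (min_le_left _ _) hz
  rw [mem_ball, Prod.dist_eq, max_lt_iff, Real.dist_eq, Real.dist_eq] at hz
  obtain ⟨-, hz₂⟩ := hz
  simp only [lt_min_iff, abs_lt] at hz₂
  set δ : ℕ → ℤ := fun k => heightStep (v k).2 z.2 - heightStep (v k).2 z₀.2
  have hδ₀ : δ 0 = 0 := by
    simp only [δ, heightStep]
    rw [if_pos (by linarith), if_pos h₀.le, sub_self]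
  have hδm : δ m = 0 := by
    simp only [δ, heightStep]
    rw [if_neg (by linarith), if_neg hm.not_ge, sub_self]
  have hterm : ∀ i < m, crossingSign (v i) (v (i + 1)) z.2 * leftIndicator (v i) (v (i + 1)) z =
      crossingSign (v i) (v (i + 1)) z.2 * leftIndicator (v i) (v (i + 1)) z₀ := by
    intro i hi
    by_cases hA : crossingSign (v i) (v (i + 1)) z.2 = 0
    · rw [hA, zero_mul, zero_mul]
    · rw [leftIndicator_eq_of_mem_ball (hv i hi) (hdisj i hi) hzε
        (mem_uIcc_of_crossingSign_ne_zero hA)]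
  -- the two segments meeting at a vertex whose height lies between `z₀.2` and `z.2`
  -- cross that height on the same side of `z₀`
  have hvertex : ∀ k, k + 1 < m → δ (k + 1) ≠ 0 →
      leftIndicator (v (k + 1)) (v (k + 2)) z₀ = leftIndicator (v k) (v (k + 1)) z₀ := by
    intro k hk hδk
    set w : ℝ × ℝ := (z₀.1, (v (k + 1)).2)
    have hw : w ∈ ball z₀ ε := by
      have := abs_sub_left_of_mem_uIcc (threshold_mem_uIcc_of_heightStep_sub_ne_zero hδk)
      rw [mem_ball, Prod.dist_eq, Real.dist_eq, Real.dist_eq, sub_self, abs_zero]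
      exact max_lt hε (this.trans_lt (abs_lt.2 hz₂.1))
    rw [← leftIndicator_eq_of_mem_ball (hv (k + 1) hk) (hdisj (k + 1) hk) hw left_mem_uIcc,
      ← leftIndicator_eq_of_mem_ball (hv k (by omega)) (hdisj k (by omega)) hw right_mem_uIcc]
    simp only [leftIndicator, w, segmentAtHeight_left_fst,
      segmentAtHeight_right_fst (hv k (by omega))]
  rw [← sub_eq_zero, wallCrossingNumber, wallCrossingNumber, ← Finset.sum_sub_distrib,
    ← sum_range_sub_mul_eq_zero (ℓ := fun i => leftIndicator (v i) (v (i + 1)) z₀) hδ₀ hδm hvertex]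
  refine Finset.sum_congr rfl fun i hi => ?_
  rw [hterm i (Finset.mem_range.1 hi)]
  simp only [δ, crossingSign]
  ring

lemma wallCrossingNumber_eq_zero_of_lt (hv : ∀ i < m, (v i).2 ≠ (v (i + 1)).2) {z : ℝ × ℝ}
    (hz : ∀ i ≤ m, z.1 < (v i).1) : wallCrossingNumber v m z = 0 := by
  refine Finset.sum_eq_zero fun i hi => ?_
  have hi := Finset.mem_range.1 hi
  have := fst_mem_uIcc_of_mem_segment (segmentAtHeight_mem_segment (hv i hi) z.2)
  rw [leftIndicator, if_neg (not_lt.2 ((lt_min (hz i hi.le) (hz (i + 1) hi)).le.trans this.1)),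
    mul_zero]

lemma wallCrossingNumber_eq_one_of_gt (hv : ∀ i < m, (v i).2 ≠ (v (i + 1)).2) {z : ℝ × ℝ}
    (hz : ∀ i ≤ m, (v i).1 < z.1) (h₀ : (v 0).2 ≤ z.2) (hm : z.2 < (v m).2) :
    wallCrossingNumber v m z = 1 := by
  have hleft : ∀ i ∈ Finset.range m, leftIndicator (v i) (v (i + 1)) z = 1 := fun i hi => by
    have hi := Finset.mem_range.1 hi
    have := fst_mem_uIcc_of_mem_segment (segmentAtHeight_mem_segment (hv i hi) z.2)
    rw [leftIndicator, if_pos (this.2.trans_lt (max_lt (hz i hi.le) (hz (i + 1) hi)))]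
  rw [wallCrossingNumber, Finset.sum_congr rfl fun i hi => by rw [hleft i hi, mul_one]]
  simp only [crossingSign]
  rw [Finset.sum_range_sub' (fun k => heightStep (v k).2 z.2), heightStep, heightStep,
    if_pos h₀, if_neg hm.not_ge, sub_zero]

theorem IsPreconnected.inter_polygonalWall_nonempty {S : Set (ℝ × ℝ)} (hS : IsPreconnected S)
    (hv : ∀ i < m, (v i).2 ≠ (v (i + 1)).2) (hSv : ∀ z ∈ S, (v 0).2 < z.2 ∧ z.2 < (v m).2)
    {a b : ℝ × ℝ} (ha : a ∈ S) (hb : b ∈ S) (hav : ∀ i ≤ m, a.1 < (v i).1)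
    (hbv : ∀ i ≤ m, (v i).1 < b.1) : (S ∩ polygonalWall v m).Nonempty := by
  by_contra hempty
  have hconst : wallCrossingNumber v m a = wallCrossingNumber v m b := by
    refine hS.induction₂' (fun z w => wallCrossingNumber v m z = wallCrossingNumber v m w)
      (fun z hz => ?_) (fun _ _ _ _ _ _ => Eq.trans) ha hb
    have hzw : z ∉ polygonalWall v m := fun h => hempty ⟨z, hz, h⟩
    filter_upwards [nhdsWithin_le_nhds
      (wallCrossingNumber_eventually_eq hv hzw (hSv z hz).1 (hSv z hz).2)] with w hw
    exact ⟨hw.symm, hw⟩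
  rw [wallCrossingNumber_eq_zero_of_lt hv hav,
    wallCrossingNumber_eq_one_of_gt hv hbv (hSv b hb).1.le (hSv b hb).2] at hconst
  exact zero_ne_one hconst

end Separation

theorem IsOpen.exists_nonhorizontal_polygon {U : Set (ℝ × ℝ)} (hU : IsOpen U)
    (hU' : IsPreconnected U) {x y : ℝ × ℝ} (hx : x ∈ U) (hy : y ∈ U) :
    ∃ (m : ℕ) (v : ℕ → ℝ × ℝ), v 0 = x ∧ v m = y ∧
      ∀ i < m, segment ℝ (v i) (v (i + 1)) ⊆ U ∧ (v i).2 ≠ (v (i + 1)).2 := by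
  let R : ℝ × ℝ → ℝ × ℝ → Prop := fun p q => segment ℝ p q ⊆ U ∧ p.2 ≠ q.2
  have hR : ∀ p q, R q p → R p q := fun p q h => ⟨segment_symm ℝ q p ▸ h.1, h.2.symm⟩
  suffices Relation.ReflTransGen R x y from this.exists_seq
  refine hU'.induction₂ _ (fun z hz => ?_) (fun _ _ _ _ _ _ => .trans)
    (fun a b _ _ h => Relation.ReflTransGen.mono hR b a (Relation.ReflTransGen.swap b a h)) hx hy
  obtain ⟨ε, hε, hball⟩ := Metric.isOpen_iff.1 hU z hz
  filter_upwards [nhdsWithin_le_nhds (ball_mem_nhds z hε)] with w hw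
  -- pass through a point of the ball above `z` and strictly higher than `w`
  set c : ℝ × ℝ := (z.1, z.2 + (ε + |w.2 - z.2|) / 2)
  have hwz : |w.2 - z.2| < ε := by
    rw [mem_ball, Prod.dist_eq, max_lt_iff, Real.dist_eq, Real.dist_eq] at hw
    exact hw.2
  have hc : c ∈ ball z ε := by
    rw [mem_ball, Prod.dist_eq, Real.dist_eq, Real.dist_eq, sub_self, abs_zero]
    simp only [c, add_sub_cancel_left]
    rw [abs_of_pos (by positivity)]
    exact max_lt hε (by linarith)
  have hzc : R z c := ⟨((convex_ball z ε).segment_subset (mem_ball_self hε) hc).trans hball,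
    by simp only [c]; intro h; linarith [abs_nonneg (w.2 - z.2)]⟩
  have hcw : R c w := ⟨((convex_ball z ε).segment_subset hc hw).trans hball, by
    simp only [c]; intro h; linarith [le_abs_self (w.2 - z.2)]⟩
  exact .tail (.single hzc) hcw

lemma IsPreconnected.subset_or_disjoint_of_disjoint_frontier {X : Type*} [TopologicalSpace X]
    {P E : Set X} (hP : IsPreconnected P) (h : Disjoint P (frontier E)) :
    P ⊆ E ∨ Disjoint P E := by
  have hcl : ∀ z ∈ P, z ∈ closure E → z ∈ interior E := fun z hz hzE =>
    ((closure_eq_interior_union_frontier E ▸ hzE).resolve_right (disjoint_left.1 h hz))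
  by_cases hne : (P ∩ interior E).Nonempty
  · exact .inl ((hP.subset_of_closure_inter_subset isOpen_interior hne fun z hz =>
      hcl z hz.2 (closure_mono interior_subset hz.1)).trans interior_subset)
  · exact .inr (disjoint_left.2 fun z hz hzE => hne ⟨z, hz, hcl z hz (subset_closure hzE)⟩)

lemma interior_setOf_snd_le (c : ℝ) : interior {p : ℝ × ℝ | p.2 ≤ c} = {p | p.2 < c} := by
  rw [← preimage_ofPred_eq (p := fun t => t ≤ c),
    ← isOpenMap_snd.preimage_interior_eq_interior_preimage continuous_snd]
  exact congrArg _ interior_Iic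

theorem Homeomorph.mapsTo_lowerHalfPlane_or_subset_image (F : ℝ × ℝ ≃ₜ ℝ × ℝ) {c : ℝ}
    (hF : ∀ p : ℝ × ℝ, p.2 = c → (F p).2 < c) :
    (∀ p : ℝ × ℝ, p.2 ≤ c → (F p).2 < c) ∨ {p : ℝ × ℝ | c < p.2} ⊆ F '' {p | p.2 ≤ c} := by
  set E := F '' {p : ℝ × ℝ | p.2 ≤ c}
  have hfr : frontier E ⊆ {p | p.2 < c} := by
    rw [← F.image_frontier]
    rintro _ ⟨p, hp, rfl⟩
    exact hF p (frontier_le_subset_eq continuous_snd continuous_const hp)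
  have hupper : IsPreconnected {p : ℝ × ℝ | c < p.2} :=
    (convex_halfSpace_gt (LinearMap.snd ℝ ℝ ℝ).isLinear c).isPreconnected
  refine (hupper.subset_or_disjoint_of_disjoint_frontier (disjoint_left.2 fun p hp hpE =>
    (hfr hpE).not_gt (show c < p.2 from hp))).symm.imp (fun h p hp => ?_) id
  have hE : E ⊆ {p | p.2 ≤ c} := fun w hw =>
    not_lt.1 fun hlt => disjoint_left.1 h (show c < w.2 from hlt) hw
  rcases hp.lt_or_eq with hp | hp
  · have hopen : F '' {p : ℝ × ℝ | p.2 < c} ⊆ interior E :=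
      interior_maximal (image_mono fun _ (h : _ < c) => h.le)
        (F.isOpenMap _ (isOpen_lt continuous_snd continuous_const))
    have := interior_mono hE (hopen ⟨p, hp, rfl⟩)
    rwa [interior_setOf_snd_le] at this
  · exact hF p hp

lemma deckT_zpow_apply (k : ℤ) (z : ℝ × ℝ) : (deckT ^ k) z = ((k : ℝ), (0 : ℝ)) + z := by
  induction k using Int.induction_on generalizing z with
  | zero => simp
  | succ k ih =>
    rw [zpow_add_one, Equiv.Perm.mul_apply, ih]
    ext
    · simp [deckT]; ring
    · simp [deckT]
  | pred k ih =>
    rw [zpow_sub_one, Equiv.Perm.mul_apply, ih]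
    ext
    · simp [deckT, Equiv.Perm.inv_def]; ring
    · simp [deckT, Equiv.Perm.inv_def]

theorem exists_forall_fst_le_add_of_disjoint {U : Set (ℝ × ℝ)}
    (hU : ∀ (j : ℤ), ∀ w ∈ U, (deckT ^ j) w ∈ U) {v : ℕ → ℝ × ℝ} {m : ℕ}
    (hv : ∀ i < m, segment ℝ (v i) (v (i + 1)) ⊆ U ∧ (v i).2 ≠ (v (i + 1)).2) :
    ∃ D : ℝ, ∀ S : Set (ℝ × ℝ), IsPreconnected S → Disjoint S U →
      (∀ z ∈ S, (v 0).2 < z.2 ∧ z.2 < (v m).2) → ∀ a ∈ S, ∀ b ∈ S, b.1 ≤ a.1 + D := by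
  obtain ⟨L, hL⟩ : ∃ L, ∀ i ≤ m, |(v i).1| ≤ L := ⟨∑ i ∈ Finset.range (m + 1), |(v i).1|,
    fun i hi => Finset.single_le_sum (f := fun i => |(v i).1|) (fun _ _ => abs_nonneg _)
      (Finset.mem_range.2 (Nat.lt_succ_of_le hi))⟩
  refine ⟨2 * L + 1, fun S hS hSU hSv a ha b hb => ?_⟩
  by_contra! hab
  -- an integer translate of the path lies strictly between `a` and `b`
  set j : ℤ := ⌊a.1 + L⌋ + 1
  have hj₁ : a.1 + L < j := by push_cast [j]; exact Int.lt_floor_add_one _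
  have hj₂ : (j : ℝ) ≤ a.1 + L + 1 := by push_cast [j]; linarith [Int.floor_le (a.1 + L)]
  obtain ⟨z, hzS, hz⟩ := hS.inter_polygonalWall_nonempty
    (v := fun i => ((j : ℝ), (0 : ℝ)) + v i) (fun i hi => by simp [(hv i hi).2])
    (by simpa using hSv) ha hb
    (fun i hi => by have := abs_le.1 (hL i hi); simp only [Prod.fst_add]; linarith)
    (fun i hi => by have := abs_le.1 (hL i hi); simp only [Prod.fst_add]; linarith)
  obtain ⟨i, hi, hz⟩ := mem_iUnion₂.1 hz
  rw [← segment_translate_image] at hz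
  obtain ⟨y, hy, rfl⟩ := hz
  have := hU j y ((hv i hi).1 hy)
  rw [deckT_zpow_apply] at this
  exact disjoint_left.1 hSU hzS this

section Dynamics

variable {f : Equiv.Perm (ℝ × ℝ)} {z : ℝ × ℝ} {a b c : ℝ}

lemma mem_thetaZ_iff {E : Set (ℝ × ℝ)} : z ∈ ThetaZ f E ↔ ∀ k : ℤ, (f ^ k) z ∈ E := by
  simp only [ThetaZ, mem_iInter, mem_image_equiv, ← Equiv.Perm.inv_def, ← zpow_neg]
  exact ⟨fun h k => by simpa using h (-k), fun h k => h (-k)⟩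

lemma mem_lamM_iff : z ∈ LamM f a b ↔ ∀ n : ℕ, ((f⁻¹ ^ n) z).2 ≤ a ∧ b ≤ z.2 := by
  simp only [LamM, mem_iInter, mem_inter_iff, mem_image_equiv, mem_ofPred_eq,
    ← Equiv.Perm.inv_def, inv_pow]

lemma thetaZ_bandAB_subset_lamM : ThetaZ f (BandAB a b) ⊆ LamM f a b := fun z hz =>
  mem_lamM_iff.2 fun n => ⟨by simpa [inv_pow, ← zpow_natCast, ← zpow_neg] using
    (mem_thetaZ_iff.1 hz (-n)).2, by simpa using (mem_thetaZ_iff.1 hz 0).1⟩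

lemma inv_pow_apply_mem_thetaZ {E : Set (ℝ × ℝ)} (hz : z ∈ ThetaZ f E) (n : ℕ) :
    (f⁻¹ ^ n) z ∈ ThetaZ f E :=
  mem_thetaZ_iff.2 fun k => by
    simpa [inv_pow, ← zpow_natCast, ← zpow_neg, ← Equiv.Perm.mul_apply, ← zpow_add,
      sub_eq_add_neg] using mem_thetaZ_iff.1 hz (k - n)

lemma pow_apply_snd_lt (hc : ∀ p : ℝ × ℝ, p.2 ≤ c → (f p).2 < c) {p : ℝ × ℝ} (hp : p.2 < c) :
    ∀ n : ℕ, ((f ^ n) p).2 < c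
  | 0 => hp
  | n + 1 => by rw [pow_succ', Equiv.Perm.mul_apply]; exact hc _ (pow_apply_snd_lt hc hp n).le

lemma inv_pow_apply_mem_bandAB_of_mem_lamM (hc : ∀ p : ℝ × ℝ, p.2 ≤ b → (f p).2 < b)
    (hz : z ∈ LamM f a b) (n : ℕ) : (f⁻¹ ^ n) z ∈ BandAB a b := by
  have h := mem_lamM_iff.1 hz
  refine ⟨not_lt.1 fun hlt => (pow_apply_snd_lt hc hlt n).not_ge ?_, (h n).1⟩
  simpa [inv_pow] using (h 0).2

lemma inv_pow_apply_notMem_image_of_mem_lamM (hz : z ∈ LamM f a b) (n : ℕ) :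
    (f⁻¹ ^ n) z ∉ f '' {p | a < p.2} := by
  rintro ⟨p, hp, hpz⟩
  have : p = (f⁻¹ ^ (n + 1)) z := by rw [pow_succ', Equiv.Perm.mul_apply, ← hpz]; simp
  exact (mem_lamM_iff.1 hz (n + 1)).1.not_gt (this ▸ hp)

lemma bddAbove_snd_image_bandAB (hf : Continuous f) (hcomm : Commute f deckT) (a b : ℝ) :
    BddAbove ((fun w => (f w).2) '' BandAB a b) := by
  obtain ⟨Y, hY⟩ := ((isCompact_Icc (a := (0 : ℝ)) (b := 1)).prod
    (isCompact_Icc (a := b) (b := a))).image (continuous_snd.comp hf) |>.bddAbove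
  refine ⟨Y, ?_⟩
  rintro _ ⟨w, hw, rfl⟩
  -- translate `w` into the fundamental domain `[0, 1] × [b, a]`
  set k := ⌊w.1⌋
  have hw' : w = (deckT ^ k) (Int.fract w.1, w.2) := by
    rw [deckT_zpow_apply]
    ext
    · simp [k, Int.floor_add_fract]
    · simp
  have hfw : f w = ((k : ℝ), (0 : ℝ)) + f (Int.fract w.1, w.2) := by
    conv_lhs => rw [hw']
    rw [← Equiv.Perm.mul_apply, (hcomm.zpow_right k).eq, Equiv.Perm.mul_apply, deckT_zpow_apply]
  show (f w).2 ≤ Y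
  rw [hfw, Prod.snd_add, zero_add]
  exact hY ⟨(Int.fract w.1, w.2), ⟨⟨Int.fract_nonneg _, (Int.fract_lt_one _).le⟩, hw⟩, rfl⟩

lemma isOpen_image_setOf_lt_snd (hf' : Continuous f.symm) : IsOpen (f '' {p | c < p.2}) := by
  rw [Equiv.image_eq_preimage_symm]
  exact (isOpen_lt continuous_const continuous_snd).preimage hf'

lemma isPreconnected_image_setOf_lt_snd (hf : Continuous f) :
    IsPreconnected (f '' {p | c < p.2}) :=
  ((convex_halfSpace_gt (LinearMap.snd ℝ ℝ ℝ).isLinear c).isPreconnected).image _ hf.continuousOn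

lemma deckT_zpow_apply_mem_image (hcomm : Commute f deckT) (j : ℤ) {w : ℝ × ℝ}
    (hw : w ∈ f '' {p | c < p.2}) : (deckT ^ j) w ∈ f '' {p | c < p.2} := by
  obtain ⟨p, hp, rfl⟩ := hw
  refine ⟨(deckT ^ j) p, by simpa [deckT_zpow_apply] using hp, ?_⟩
  rw [← Equiv.Perm.mul_apply, (hcomm.zpow_right j).eq, Equiv.Perm.mul_apply]

lemma mem_image_setOf_lt_snd (hc : ∀ p : ℝ × ℝ, p.2 ≤ c → (f p).2 < c) {w : ℝ × ℝ}
    (hw : c ≤ w.2) : w ∈ f '' {p | c < p.2} :=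
  ⟨f⁻¹ w, not_le.1 fun h => (hc _ h).not_ge (by simpa using hw), by simp⟩

lemma exists_mem_image_setOf_lt_snd (hf : Continuous f) {p : ℝ × ℝ} {c' : ℝ}
    (hp : (f p).2 < c') : ∃ q ∈ f '' {w | p.2 < w.2}, q.2 < c' := by
  have hcont : Continuous fun t : ℝ => (f (p.1, t)).2 := by fun_prop
  have hev : ∀ᶠ t in 𝓝[>] p.2, (f (p.1, t)).2 < c' :=
    nhdsWithin_le_nhds (hcont.continuousAt.eventually_lt continuousAt_const (by simpa using hp))
  obtain ⟨t, ht, hpt⟩ := (hev.and self_mem_nhdsWithin).exists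
  exact ⟨f (p.1, t), ⟨(p.1, t), hpt, rfl⟩, ht⟩

theorem tendsto_inv_pow_apply_fst_atBot {K : Set (ℝ × ℝ)} (hρ : rhoB f K ⊆ Ioi 0) {x : ℝ × ℝ}
    (hx : ∀ n : ℕ, (f⁻¹ ^ n) x ∈ K) : Tendsto (fun n => ((f⁻¹ ^ n) x).1) atTop atBot := by
  rw [tendsto_atBot]
  intro R
  by_contra hR
  simp only [not_eventually, not_le] at hR
  set ρ : ℕ → EReal := fun n => (((x.1 - ((f⁻¹ ^ n) x).1) / n : ℝ) : EReal)
  set l := atTop ⊓ 𝓟 {n | R < ((f⁻¹ ^ n) x).1}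
  have : l.NeBot := frequently_iff_neBot.1 hR
  -- a cluster point of the mean displacements along `l` lies in the rotation set, yet is `≤ 0`
  obtain ⟨e, he⟩ := exists_clusterPt_of_compactSpace (map ρ l)
  have hcl : ∀ m, e ∈ closure (ρ '' {n | m ≤ n ∧ R < ((f⁻¹ ^ n) x).1}) := fun m =>
    mem_closure_iff_clusterPt.2 (he.mono (le_principal_iff.2
      (image_mem_map (inter_mem_inf (mem_atTop m) (mem_principal_self _)))))
  have hρe : e ∈ rhoB f K := by
    simp only [rhoB, mem_iInter]
    intro m _
    refine closure_mono ?_ (hcl m)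
    rintro _ ⟨n, ⟨hmn, -⟩, rfl⟩
    exact mem_iUnion₂.2 ⟨n, hmn, (f⁻¹ ^ n) x, hx n, by simpa [inv_pow] using hx 0,
      by simp [ρ, inv_pow]⟩
  have hle : ∀ m : ℕ, 1 ≤ m → e ≤ ((max (x.1 - R) 0 / m : ℝ) : EReal) := by
    intro m hm
    refine closure_minimal ?_ isClosed_Iic (hcl m)
    rintro _ ⟨n, ⟨hmn, hn⟩, rfl⟩
    have hm' : (0 : ℝ) < m := by exact_mod_cast hm
    have hmn' : (m : ℝ) ≤ n := by exact_mod_cast hmn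
    simp only [mem_Iic, EReal.coe_le_coe_iff, ρ]
    calc (x.1 - ((f⁻¹ ^ n) x).1) / n ≤ max (x.1 - R) 0 / n := by
          gcongr
          exact le_max_of_le_left (by linarith)
      _ ≤ max (x.1 - R) 0 / m := by gcongr
  have hlim : Tendsto (fun m : ℕ => ((max (x.1 - R) 0 / m : ℝ) : EReal)) atTop (𝓝 0) := by
    simpa [Function.comp_def] using (continuous_coe_real_ereal.tendsto 0).comp
      (tendsto_const_div_atTop_nhds_zero_nat (max (x.1 - R) 0))
  exact (hρ hρe).not_ge (ge_of_tendsto hlim (eventually_atTop.2 ⟨1, hle⟩))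

section Homeomorphism

variable (hf : Continuous f) (hf' : Continuous f.symm)
include hf hf'

lemma snd_lt_of_thetaZ_bandAB_nonempty (hline : ∀ p : ℝ × ℝ, p.2 = b → (f p).2 < b)
    (hΘ : (ThetaZ f (BandAB a b)).Nonempty) : ∀ p : ℝ × ℝ, p.2 ≤ b → (f p).2 < b := by
  refine ((⟨f, hf, hf'⟩ : ℝ × ℝ ≃ₜ ℝ × ℝ).mapsTo_lowerHalfPlane_or_subset_image
    hline).resolve_right fun hsub => ?_
  obtain ⟨z, hz⟩ := hΘ
  -- the orbit of `z` stays in the band without meeting the line, so `z` and `f z` lie above it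
  have hband := mem_thetaZ_iff.1 hz
  have hgt : ∀ k : ℤ, b < ((f ^ k) z).2 := fun k => (hband k).1.lt_of_ne fun h =>
    (hline _ h.symm).not_ge (by simpa [zpow_one_add] using (hband (1 + k)).1)
  obtain ⟨u, hu, hfu⟩ := hsub (show b < ((f ^ (1 : ℤ)) z).2 from hgt 1)
  have : u = z := f.injective (by simpa using hfu)
  exact (hgt 0).not_ge (by simpa [this] using hu)

lemma snd_lt_of_bddAbove (hline : ∀ p : ℝ × ℝ, p.2 = a → (f p).2 < a)
    (hb : ∀ p : ℝ × ℝ, p.2 ≤ b → (f p).2 < b)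
    (hY : BddAbove ((fun w => (f w).2) '' BandAB a b)) :
    ∀ p : ℝ × ℝ, p.2 ≤ a → (f p).2 < a := by
  refine ((⟨f, hf, hf'⟩ : ℝ × ℝ ≃ₜ ℝ × ℝ).mapsTo_lowerHalfPlane_or_subset_image
    hline).resolve_right fun hsub => ?_
  obtain ⟨Y, hY⟩ := hY
  set H := max a (max b Y) + 1
  -- the image of the lower half-plane lies below `max b Y`, so it misses the point `(0, H)`
  obtain ⟨u, hu, hfu⟩ := hsub (show a < ((0 : ℝ), H).2 by
    simp only [H]; linarith [le_max_left a (max b Y)])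
  have hfu : (f u).2 = H := by simpa using congrArg Prod.snd hfu
  rcases le_or_gt b u.2 with h | h
  · have := hY ⟨u, ⟨h, hu⟩, rfl⟩
    simp only [hfu] at this
    linarith [le_max_right a (max b Y), le_max_right b Y]
  · linarith [hb u h.le, le_max_right a (max b Y), le_max_left b Y]

lemma exists_nonhorizontal_polygon_in_image (hc : ∀ p : ℝ × ℝ, p.2 ≤ a → (f p).2 < a)
    {p : ℝ × ℝ} (hpa : p.2 = a) (hpb : (f p).2 < b) :
    ∃ (m : ℕ) (v : ℕ → ℝ × ℝ), (v 0).2 < b ∧ a < (v m).2 ∧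
      ∀ i < m, segment ℝ (v i) (v (i + 1)) ⊆ f '' {w | a < w.2} ∧ (v i).2 ≠ (v (i + 1)).2 := by
  obtain ⟨q, hqU, hq⟩ := exists_mem_image_setOf_lt_snd hf hpb
  rw [hpa] at hqU
  obtain ⟨m, v, rfl, hvm, hv⟩ := (isOpen_image_setOf_lt_snd hf').exists_nonhorizontal_polygon
    (isPreconnected_image_setOf_lt_snd hf) hqU
    (mem_image_setOf_lt_snd hc (show a ≤ ((0 : ℝ), a + 1).2 by simp))
  exact ⟨m, v, hq, by simp [hvm], hv⟩

end Homeomorphism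

end Dynamics

theorem backward_iterates_of_unstable_branch_bounded_right_general
    (ftil : Equiv.Perm (ℝ × ℝ)) (hftc : Continuous ftil) (hftc' : Continuous ftil.symm)
    (hcomm : ∀ z : ℝ × ℝ, ftil (deckT z) = deckT (ftil z))
    (c0 c1 c2 : ℝ) (h12 : c2 < c1)
    (hH1 : ∀ c ∈ ({c0, c1, c2} : Set ℝ), ∀ p : ℝ × ℝ, p.2 = c → (ftil p).2 < c)
    (hH2 : ∀ n : ℕ, 1 ≤ n → ∃ p : ℝ × ℝ, p.2 = c0 ∧ ((ftil ^ n) p).2 = c2)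
    (hTh0 : (ThetaZ ftil (BandAB c0 c1)).Nonempty)
    (hr0 : rhoB ftil (ThetaZ ftil (BandAB c0 c1)) ⊆ Ioo (0 : EReal) ⊤)
    (x : ℝ × ℝ) (hx : x ∈ ThetaZ ftil (BandAB c0 c1)) :
    ∀ M : ℝ, ∃ n0 : ℕ, ∀ n : ℕ, n0 ≤ n →
      (ftil⁻¹ ^ n) '' connectedComponentIn (LamM ftil c0 c1) x ⊆
        {z : ℝ × ℝ | z ∈ BandAB c0 c1 ∧ z.1 < M} := by
  have hc : Commute ftil deckT := Equiv.ext hcomm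
  have hHP1 := snd_lt_of_thetaZ_bandAB_nonempty hftc hftc' (hH1 c1 (by simp)) hTh0
  have hHP0 := snd_lt_of_bddAbove hftc hftc' (hH1 c0 (by simp)) hHP1
    (bddAbove_snd_image_bandAB hftc hc c0 c1)
  obtain ⟨p, hp0, hp2⟩ := hH2 1 le_rfl
  obtain ⟨m, v, hv0, hvm, hv⟩ := exists_nonhorizontal_polygon_in_image hftc hftc' hHP0 hp0
    (by rw [pow_one] at hp2; rwa [hp2])
  obtain ⟨D, hD⟩ :=
    exists_forall_fst_le_add_of_disjoint (fun j _ => deckT_zpow_apply_mem_image hc j) hv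
  set C := connectedComponentIn (LamM ftil c0 c1) x
  have hxC : x ∈ C := mem_connectedComponentIn (thetaZ_bandAB_subset_lamM hx)
  intro M
  obtain ⟨n₀, hn₀⟩ := eventually_atTop.1 ((tendsto_inv_pow_apply_fst_atBot
    (hr0.trans Ioo_subset_Ioi_self) (inv_pow_apply_mem_thetaZ hx)).eventually_lt_atBot (M - D))
  refine ⟨n₀, fun n hn => ?_⟩
  have hband : ∀ w ∈ C, (ftil⁻¹ ^ n) w ∈ BandAB c0 c1 :=
    fun w hw => inv_pow_apply_mem_bandAB_of_mem_lamM hHP1 (connectedComponentIn_subset _ _ hw) n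
  have hcont : Continuous ⇑(ftil⁻¹ ^ n) := Equiv.Perm.coe_pow _ n ▸ hftc'.iterate n
  rintro _ ⟨u, hu, rfl⟩
  refine ⟨hband u hu, ?_⟩
  have := hD _ (isPreconnected_connectedComponentIn.image _ hcont.continuousOn)
    (disjoint_left.2 fun _ ⟨w, hw, hwz⟩ => hwz ▸
      inv_pow_apply_notMem_image_of_mem_lamM (connectedComponentIn_subset _ _ hw) n)
    (fun _ ⟨w, hw, hwz⟩ => hwz ▸ ⟨hv0.trans_le (hband w hw).1, (hband w hw).2.trans_lt hvm⟩)
    _ (mem_image_of_mem _ hxC) _ (mem_image_of_mem _ hu)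
  linarith [hn₀ n hn]

/-- **Lemma 6.10.** Under (H₁)–(H₃), for `x ∈ Θ(Ã₀)` the sequence `(f̃⁻ⁿ(Λ₀⁻(x)))_{n∈ℕ}` is
uniformly bounded to the right. -/
theorem backward_iterates_of_unstable_branch_bounded_right
    (ftil : Equiv.Perm (ℝ × ℝ)) (hftc : Continuous ftil) (hftc' : Continuous ftil.symm)
    (hfI : IsotopicToIdP ftil)
    (hcomm : ∀ z : ℝ × ℝ, ftil (deckT z) = deckT (ftil z))
    (c0 c1 c2 : ℝ) (h01 : c1 < c0) (h12 : c2 < c1)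
    (hH1 : ∀ c ∈ ({c0, c1, c2} : Set ℝ), ∀ p : ℝ × ℝ, p.2 = c → (ftil p).2 < c)
    (hH2 : ∀ n : ℕ, 1 ≤ n → ∃ p : ℝ × ℝ, p.2 = c0 ∧ ((ftil ^ n) p).2 = c2)
    (hTh0 : (ThetaZ ftil (BandAB c0 c1)).Nonempty)
    (hTh1 : (ThetaZ ftil (BandAB c1 c2)).Nonempty)
    (hr0 : rhoB ftil (ThetaZ ftil (BandAB c0 c1)) ⊆ Ioo (0 : EReal) ⊤)
    (hr1 : rhoB ftil (ThetaZ ftil (BandAB c1 c2)) ⊆ Ioo ⊥ (0 : EReal))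
    (x : ℝ × ℝ) (hx : x ∈ ThetaZ ftil (BandAB c0 c1)) :
    ∀ M : ℝ, ∃ n0 : ℕ, ∀ n : ℕ, n0 ≤ n →
      (ftil⁻¹ ^ n) '' connectedComponentIn (LamM ftil c0 c1) x ⊆
        {z : ℝ × ℝ | z ∈ BandAB c0 c1 ∧ z.1 < M} :=
  backward_iterates_of_unstable_branch_bounded_right_general ftil hftc hftc' hcomm c0 c1 c2 h12 hH1
    hH2 hTh0 hr0 x hx
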